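/- Fix λ ∈ ℂ and u, v, w ∈ ℝ. On the open set U = {(t,x) ∈ ℝ² : x ≠ 0}, define for smooth f : U → ℂ the operators P f = 2i ∂_t f + ∂_x² f − (2λ/x²) f and Q f = (t v − u) ∂_x f + (i/2)(w − 2 v x) f. Then for every smooth f : U → ℂ and all (t,x) ∈ U: P(Q f)(t,x) − Q(P f)(t,x) = −(4λ (t v − u)/x³) f(t,x). In particular the commutator [P,Q] vanishes identically (for all f) if and only if λ(t v − u) = 0 for all t, i.e. if and only if λ = 0 or u = v = 0. -/

import Mathlib

open Complex

/-- Partial derivative in the first (time) variable. -/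
noncomputable def pderivT (f : ℝ → ℝ → ℂ) (t x : ℝ) : ℂ := deriv (fun t' => f t' x) t

/-- Partial derivative in the second (space) variable. -/
noncomputable def pderivX (f : ℝ → ℝ → ℂ) (t x : ℝ) : ℂ := deriv (fun x' => f t x') x

/-- Second partial derivative in the space variable. -/
noncomputable def pderivXX (f : ℝ → ℝ → ℂ) (t x : ℝ) : ℂ :=
  deriv (deriv (fun x' => f t x')) x

/-- `P f = 2i ∂_t f + ∂_x² f - (2λ/x²) f`, the Schrödinger operator with
inverse-square potential. -/
noncomputable def Pop (lam : ℂ) (f : ℝ → ℝ → ℂ) (t x : ℝ) : ℂ :=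
  2 * I * pderivT f t x + pderivXX f t x - (2 * lam / (x : ℂ) ^ 2) * f t x

/-- `Q f = (tv - u) ∂_x f + (i/2)(w - 2vx) f`, the action of `(u,v,w) ∈ 𝔥₃(ℝ)`. -/
noncomputable def Qop (u v w : ℝ) (f : ℝ → ℝ → ℂ) (t x : ℝ) : ℂ :=
  ((t * v - u : ℝ) : ℂ) * pderivX f t x + (I / 2) * ((w : ℂ) - 2 * (v : ℂ) * (x : ℂ)) * f t x

section Key

variable {f : ℝ → ℝ → ℂ}

private lemma hU_open : IsOpen {p : ℝ × ℝ | p.2 ≠ 0} :=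
  isOpen_compl_singleton.preimage continuous_snd

/-- x-partial as an `fderiv`. -/
private lemma hderiv_x
    (hf : ContDiffOn ℝ (⊤ : ℕ∞) (fun p : ℝ × ℝ => f p.1 p.2) {p : ℝ × ℝ | p.2 ≠ 0})
    (t x : ℝ) (hx : x ≠ 0) :
    HasDerivAt (fun x' => f t x')
      ((fderiv ℝ (fun p : ℝ × ℝ => f p.1 p.2) (t, x)) (0, 1)) x := by
  have hmem : ((t, x) : ℝ × ℝ) ∈ {p : ℝ × ℝ | p.2 ≠ 0} := hx
  have hF : DifferentiableAt ℝ (fun p : ℝ × ℝ => f p.1 p.2) (t, x) :=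
    ((hf.contDiffAt (hU_open.mem_nhds hmem)).of_le (by exact_mod_cast (le_top : (1 : ℕ∞) ≤ ⊤) : (1 : WithTop ℕ∞) ≤ ((⊤ : ℕ∞) : WithTop ℕ∞))).differentiableAt
      one_ne_zero
  have hc : HasDerivAt (fun x' : ℝ => ((t : ℝ), x')) ((0 : ℝ), (1 : ℝ)) x :=
    (hasDerivAt_const x t).prodMk (hasDerivAt_id x)
  exact hF.hasFDerivAt.comp_hasDerivAt x hc

/-- t-partial as an `fderiv`. -/
private lemma hderiv_t
    (hf : ContDiffOn ℝ (⊤ : ℕ∞) (fun p : ℝ × ℝ => f p.1 p.2) {p : ℝ × ℝ | p.2 ≠ 0})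
    (t x : ℝ) (hx : x ≠ 0) :
    HasDerivAt (fun t' => f t' x)
      ((fderiv ℝ (fun p : ℝ × ℝ => f p.1 p.2) (t, x)) (1, 0)) t := by
  have hmem : ((t, x) : ℝ × ℝ) ∈ {p : ℝ × ℝ | p.2 ≠ 0} := hx
  have hF : DifferentiableAt ℝ (fun p : ℝ × ℝ => f p.1 p.2) (t, x) :=
    ((hf.contDiffAt (hU_open.mem_nhds hmem)).of_le (by exact_mod_cast (le_top : (1 : ℕ∞) ≤ ⊤) : (1 : WithTop ℕ∞) ≤ ((⊤ : ℕ∞) : WithTop ℕ∞))).differentiableAt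
      one_ne_zero
  have hc : HasDerivAt (fun t' : ℝ => (t', (x : ℝ))) ((1 : ℝ), (0 : ℝ)) t :=
    (hasDerivAt_id t).prodMk (hasDerivAt_const t x)
  exact hF.hasFDerivAt.comp_hasDerivAt t hc

/-- The second `fderiv` exists (as a `HasFDerivAt` of the first `fderiv`). -/
private lemma hclm
    (hf : ContDiffOn ℝ (⊤ : ℕ∞) (fun p : ℝ × ℝ => f p.1 p.2) {p : ℝ × ℝ | p.2 ≠ 0})
    (t x : ℝ) (hx : x ≠ 0) :
    HasFDerivAt (fderiv ℝ (fun p : ℝ × ℝ => f p.1 p.2))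
      (fderiv ℝ (fderiv ℝ (fun p : ℝ × ℝ => f p.1 p.2)) (t, x)) (t, x) := by
  have hmem : ((t, x) : ℝ × ℝ) ∈ {p : ℝ × ℝ | p.2 ≠ 0} := hx
  exact (((hf.contDiffAt (hU_open.mem_nhds hmem)).fderiv_right
    (WithTop.coe_le_coe.2 le_top : (1 : WithTop ℕ∞) + 1 ≤ ((⊤ : ℕ∞) : WithTop ℕ∞))).differentiableAt one_ne_zero).hasFDerivAt

/-- mixed partial: t-derivative of the x-partial. -/
private lemma hmixed_t
    (hf : ContDiffOn ℝ (⊤ : ℕ∞) (fun p : ℝ × ℝ => f p.1 p.2) {p : ℝ × ℝ | p.2 ≠ 0})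
    (t x : ℝ) (hx : x ≠ 0) :
    HasDerivAt (fun t' => deriv (fun x' => f t' x') x)
      ((fderiv ℝ (fderiv ℝ (fun p : ℝ × ℝ => f p.1 p.2)) (t, x)) (1, 0) (0, 1)) t := by
  have hEq : (fun t' => deriv (fun x' => f t' x') x)
      = fun t' => (fderiv ℝ (fun p : ℝ × ℝ => f p.1 p.2) (t', x)) (0, 1) :=
    funext fun t' => (hderiv_x hf t' x hx).deriv
  rw [hEq]
  have hc : HasDerivAt (fun t' : ℝ => (t', (x : ℝ))) ((1 : ℝ), (0 : ℝ)) t :=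
    (hasDerivAt_id t).prodMk (hasDerivAt_const t x)
  have h1 := (hclm hf t x hx).comp_hasDerivAt t hc
  simpa [Function.comp] using h1.clm_apply (hasDerivAt_const t ((0 : ℝ), (1 : ℝ)))

/-- mixed partial: x-derivative of the t-partial. -/
private lemma hmixed_x
    (hf : ContDiffOn ℝ (⊤ : ℕ∞) (fun p : ℝ × ℝ => f p.1 p.2) {p : ℝ × ℝ | p.2 ≠ 0})
    (t x : ℝ) (hx : x ≠ 0) :
    HasDerivAt (fun x' => deriv (fun t' => f t' x') t)
      ((fderiv ℝ (fderiv ℝ (fun p : ℝ × ℝ => f p.1 p.2)) (t, x)) (0, 1) (1, 0)) x := by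
  have hev : (fun x' => deriv (fun t' => f t' x') t)
      =ᶠ[nhds x] fun x' => (fderiv ℝ (fun p : ℝ × ℝ => f p.1 p.2) (t, x')) (1, 0) := by
    filter_upwards [isOpen_ne.mem_nhds hx] with y hy
    exact (hderiv_t hf t y hy).deriv
  have hc : HasDerivAt (fun x' : ℝ => ((t : ℝ), x')) ((0 : ℝ), (1 : ℝ)) x :=
    (hasDerivAt_const x t).prodMk (hasDerivAt_id x)
  have h1 := (hclm hf t x hx).comp_hasDerivAt x hc
  have h2 : HasDerivAt (fun x' => (fderiv ℝ (fun p : ℝ × ℝ => f p.1 p.2) (t, x')) (1, 0))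
      ((fderiv ℝ (fderiv ℝ (fun p : ℝ × ℝ => f p.1 p.2)) (t, x)) (0, 1) (1, 0)) x := by
    simpa [Function.comp] using h1.clm_apply (hasDerivAt_const x ((1 : ℝ), (0 : ℝ)))
  exact h2.congr_of_eventuallyEq hev

private lemma key (lam : ℂ) (u v w : ℝ)
    (hf : ContDiffOn ℝ (⊤ : ℕ∞) (fun p : ℝ × ℝ => f p.1 p.2) {p : ℝ × ℝ | p.2 ≠ 0})
    (t x : ℝ) (hx : x ≠ 0) :
    Pop lam (fun t' x' => Qop u v w f t' x') t x
      - Qop u v w (fun t' x' => Pop lam f t' x') t x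
      = -(4 * lam * ((t * v - u : ℝ) : ℂ) / (x : ℂ) ^ 3) * f t x := by
  have hx' : (x : ℂ) ≠ 0 := Complex.ofReal_ne_zero.2 hx
  have hmem : ((t, x) : ℝ × ℝ) ∈ {p : ℝ × ℝ | p.2 ≠ 0} := hx
  have hS : IsOpen {x' : ℝ | x' ≠ 0} := isOpen_ne
  -- smoothness of the x-slice and its derivatives
  have hgS : ContDiffOn ℝ (⊤ : ℕ∞) (fun x' => f t x') {x' : ℝ | x' ≠ 0} :=
    hf.comp ((contDiff_const.prodMk contDiff_id).contDiffOn) (fun x' hx' => hx')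
  have hg1S : ContDiffOn ℝ (⊤ : ℕ∞) (deriv (fun x' => f t x')) {x' : ℝ | x' ≠ 0} :=
    hgS.deriv_of_isOpen hS (by simp)
  have hg2S : ContDiffOn ℝ (⊤ : ℕ∞) (deriv (deriv (fun x' => f t x'))) {x' : ℝ | x' ≠ 0} :=
    hg1S.deriv_of_isOpen hS (by simp)
  have hg0 : ∀ y : ℝ, y ≠ 0 → HasDerivAt (fun x' => f t x') (deriv (fun x' => f t x') y) y :=
    fun y hy => ((hgS.contDiffAt (hS.mem_nhds hy)).differentiableAt
      (by simp)).hasDerivAt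
  have hg1 : ∀ y : ℝ, y ≠ 0 → HasDerivAt (deriv (fun x' => f t x'))
      (deriv (deriv (fun x' => f t x')) y) y :=
    fun y hy => ((hg1S.contDiffAt (hS.mem_nhds hy)).differentiableAt
      (by simp)).hasDerivAt
  have hg2 : HasDerivAt (deriv (deriv (fun x' => f t x')))
      (deriv (deriv (deriv (fun x' => f t x'))) x) x :=
    ((hg2S.contDiffAt (hS.mem_nhds hx)).differentiableAt
      (by simp)).hasDerivAt
  -- coercion derivative
  have hco : ∀ y : ℝ, HasDerivAt (fun x' : ℝ => ((x' : ℝ) : ℂ)) 1 y := fun y => by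
    simpa using (hasDerivAt_id y).ofReal_comp
  -- the affine coefficient in t
  have hA : HasDerivAt (fun t' : ℝ => ((t' * v - u : ℝ) : ℂ)) ((v : ℂ)) t := by
    have h := (((hasDerivAt_id t).mul_const v).sub_const u).ofReal_comp
    simpa using h
  -- the b coefficient in x
  have hb : ∀ y : ℝ, HasDerivAt (fun x' : ℝ => I / 2 * ((w : ℂ) - 2 * (v : ℂ) * (x' : ℂ)))
      (-(I * (v : ℂ))) y := by
    intro y
    have h := ((hasDerivAt_const y ((w : ℂ))).sub
      ((hco y).const_mul (2 * (v : ℂ)))).const_mul (I / 2)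
    have hval : -(I * (v : ℂ)) = I / 2 * (0 - 2 * (v : ℂ) * 1) := by ring
    rw [hval]; exact h
  -- symmetry of second derivatives
  have hsym : (fderiv ℝ (fderiv ℝ (fun p : ℝ × ℝ => f p.1 p.2)) (t, x)) (1, 0) (0, 1)
      = (fderiv ℝ (fderiv ℝ (fun p : ℝ × ℝ => f p.1 p.2)) (t, x)) (0, 1) (1, 0) :=
    ((hf.contDiffAt (hU_open.mem_nhds hmem)).isSymmSndFDerivAt
      (by rw [minSmoothness_of_isRCLikeNormedField]; exact (WithTop.coe_le_coe.2 le_top : (2 : WithTop ℕ∞) ≤ ((⊤ : ℕ∞) : WithTop ℕ∞)))) (1, 0) (0, 1)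
  -- e1 : t-derivative of Qf
  have e1 : deriv (fun t' => Qop u v w f t' x) t
      = ((v : ℂ) * deriv (fun x' => f t x') x
          + ((t * v - u : ℝ) : ℂ)
              * ((fderiv ℝ (fderiv ℝ (fun p : ℝ × ℝ => f p.1 p.2)) (t, x)) (1, 0) (0, 1)))
        + I / 2 * ((w : ℂ) - 2 * (v : ℂ) * (x : ℂ)) * deriv (fun t' => f t' x) t := by
    have hfn : (fun t' => Qop u v w f t' x)
        = fun t' => ((t' * v - u : ℝ) : ℂ) * deriv (fun x' => f t' x') x
            + I / 2 * ((w : ℂ) - 2 * (v : ℂ) * (x : ℂ)) * f t' x := rfl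
    rw [hfn]
    have hdt : HasDerivAt (fun t' => f t' x) (deriv (fun t' => f t' x) t) t :=
      (hderiv_t hf t x hx).differentiableAt.hasDerivAt
    exact ((hA.mul (hmixed_t hf t x hx)).add
      (hdt.const_mul (I / 2 * ((w : ℂ) - 2 * (v : ℂ) * (x : ℂ))))).deriv
  -- e2 : second x-derivative of Qf
  have e2 : deriv (deriv (fun x' => Qop u v w f t x')) x
      = ((t * v - u : ℝ) : ℂ) * deriv (deriv (deriv (fun x' => f t x'))) x
        + ((-(I * (v : ℂ)) * deriv (fun x' => f t x') x)
          + ((-(I * (v : ℂ))) * deriv (fun x' => f t x') x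
            + I / 2 * ((w : ℂ) - 2 * (v : ℂ) * (x : ℂ))
                * deriv (deriv (fun x' => f t x')) x)) := by
    have hq : ∀ y : ℝ, y ≠ 0 → HasDerivAt (fun x' => Qop u v w f t x')
        (((t * v - u : ℝ) : ℂ) * deriv (deriv (fun x' => f t x')) y
          + (-(I * (v : ℂ)) * f t y
            + I / 2 * ((w : ℂ) - 2 * (v : ℂ) * (y : ℂ)) * deriv (fun x' => f t x') y)) y := by
      intro y hy
      exact ((hg1 y hy).const_mul (((t * v - u : ℝ) : ℂ))).add ((hb y).mul (hg0 y hy))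
    have hev : deriv (fun x' => Qop u v w f t x')
        =ᶠ[nhds x] fun y => ((t * v - u : ℝ) : ℂ) * deriv (deriv (fun x' => f t x')) y
          + (-(I * (v : ℂ)) * f t y
            + I / 2 * ((w : ℂ) - 2 * (v : ℂ) * (y : ℂ)) * deriv (fun x' => f t x') y) := by
      filter_upwards [hS.mem_nhds hx] with y hy
      exact (hq y hy).deriv
    rw [hev.deriv_eq]
    exact ((hg2.const_mul (((t * v - u : ℝ) : ℂ))).add
      (((hg0 x hx).const_mul (-(I * (v : ℂ)))).add ((hb x).mul (hg1 x hx)))).deriv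
  -- e4 : x-derivative of Pf
  have e4 : deriv (fun x' => Pop lam f t x') x
      = ((2 * I * ((fderiv ℝ (fderiv ℝ (fun p : ℝ × ℝ => f p.1 p.2)) (t, x)) (0, 1) (1, 0)))
          + deriv (deriv (deriv (fun x' => f t x'))) x)
        - (((0 * (x : ℂ) ^ 2 - 2 * lam * (1 * (x : ℂ) + (x : ℂ) * 1)) / ((x : ℂ) ^ 2) ^ 2)
              * f t x
            + (2 * lam / (x : ℂ) ^ 2) * deriv (fun x' => f t x') x) := by
    have hfn : (fun x' => Pop lam f t x')
        = fun x' => (2 * I * deriv (fun t' => f t' x') t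
            + deriv (deriv (fun y => f t y)) x')
          - (2 * lam / ((x' : ℝ) : ℂ) ^ 2) * f t x' := rfl
    rw [hfn]
    have hsq : HasDerivAt (fun x' : ℝ => ((x' : ℝ) : ℂ) ^ 2)
        (1 * (x : ℂ) + (x : ℂ) * 1) x := by
      have hfn2 : (fun x' : ℝ => ((x' : ℝ) : ℂ) ^ 2)
          = fun x' : ℝ => ((x' : ℝ) : ℂ) * ((x' : ℝ) : ℂ) := by funext y; ring
      rw [hfn2]; exact (hco x).mul (hco x)
    have hpot : HasDerivAt (fun x' : ℝ => 2 * lam / ((x' : ℝ) : ℂ) ^ 2)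
        ((0 * (x : ℂ) ^ 2 - 2 * lam * (1 * (x : ℂ) + (x : ℂ) * 1)) / ((x : ℂ) ^ 2) ^ 2) x :=
      (hasDerivAt_const x (2 * lam)).div hsq (pow_ne_zero 2 hx')
    exact ((((hmixed_x hf t x hx).const_mul (2 * I)).add hg2).sub
      (hpot.mul (hg0 x hx))).deriv
  -- now assemble
  simp only [Pop, Qop, pderivT, pderivX, pderivXX] at e1 e2 e4 ⊢
  rw [e1, e2, e4, hsym]
  have hx3 : ((x : ℂ) ^ 2) ≠ 0 := pow_ne_zero 2 hx'
  push_cast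
  field_simp
  have hc1 : ((x : ℂ))⁻¹ ^ 10 * (x : ℂ) ^ 10 = 1 := by
    rw [← mul_pow, inv_mul_cancel₀ hx', one_pow]
  linear_combination (0 : ℂ) * hc1

end Key

/-- The commutator of the Schrödinger operator `P = □ - 2λ/x²` with the Heisenberg
operator `Q` is multiplication by `-4λ(tv - u)/x³`; in particular it vanishes for all
smooth `f` on `{x ≠ 0}` iff `λ = 0` or `u = v = 0`. -/
theorem heisenberg_commutator (lam : ℂ) (u v w : ℝ) :
    (∀ f : ℝ → ℝ → ℂ,
      ContDiffOn ℝ (⊤ : ℕ∞) (fun p : ℝ × ℝ => f p.1 p.2) {p : ℝ × ℝ | p.2 ≠ 0} →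
      ∀ t x : ℝ, x ≠ 0 →
        Pop lam (fun t' x' => Qop u v w f t' x') t x
          - Qop u v w (fun t' x' => Pop lam f t' x') t x
          = -(4 * lam * ((t * v - u : ℝ) : ℂ) / (x : ℂ) ^ 3) * f t x) ∧
    ((∀ f : ℝ → ℝ → ℂ,
        ContDiffOn ℝ (⊤ : ℕ∞) (fun p : ℝ × ℝ => f p.1 p.2) {p : ℝ × ℝ | p.2 ≠ 0} →
        ∀ t x : ℝ, x ≠ 0 →
          Pop lam (fun t' x' => Qop u v w f t' x') t x
            - Qop u v w (fun t' x' => Pop lam f t' x') t x = 0) ↔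
      (lam = 0 ∨ (u = 0 ∧ v = 0))) := by
  constructor
  · intro f hf t x hx
    exact key lam u v w hf t x hx
  · constructor
    · intro H
      by_cases hlam : lam = 0
      · exact Or.inl hlam
      · right
        have hone : ContDiffOn ℝ (⊤ : ℕ∞) (fun p : ℝ × ℝ => (fun _ _ : ℝ => (1 : ℂ)) p.1 p.2)
            {p : ℝ × ℝ | p.2 ≠ 0} := contDiffOn_const
        have hval : ∀ t : ℝ, lam * ((t * v - u : ℝ) : ℂ) = 0 := by
          intro t
          have h1 := H (fun _ _ => (1 : ℂ)) hone t 1 one_ne_zero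
          have h2 := key (f := fun _ _ => (1 : ℂ)) lam u v w hone t 1 one_ne_zero
          rw [h1] at h2
          have h3 : -(4 * lam * ((t * v - u : ℝ) : ℂ) / ((1 : ℝ) : ℂ) ^ 3) * 1 = 0 := h2.symm
          simp only [Complex.ofReal_one, one_pow, div_one, mul_one, neg_eq_zero] at h3
          have h4 : (4 : ℂ) ≠ 0 := by norm_num
          rcases mul_eq_zero.1 h3 with h | h
          · rcases mul_eq_zero.1 h with h' | h'
            · exact absurd h' h4
            · exact absurd h' hlam
          · rw [h, mul_zero]
        have hu : u = 0 := by
          have := hval 0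
          rcases mul_eq_zero.1 this with h | h
          · exact absurd h hlam
          · have : (0 : ℝ) * v - u = 0 := by exact_mod_cast h
            linarith
        have hv : v = 0 := by
          have := hval 1
          rcases mul_eq_zero.1 this with h | h
          · exact absurd h hlam
          · have : (1 : ℝ) * v - u = 0 := by exact_mod_cast h
            linarith
        exact ⟨hu, hv⟩
    · rintro (hlam | ⟨hu, hv⟩) <;> intro f hf t x hx <;>
        rw [key lam u v w hf t x hx]
      · simp [hlam]
      · simp [hu, hv]
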